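/- arXiv:2304.07252 — 2 statements merged into one kernel-verified Lean document; each statement's English description precedes it below -/
import Mathlib

section
/- For a,b in L^∞(T), ‖S_{a,b}‖ = ‖a‖_∞ + ‖b‖_∞ if and only if a = 0 a.e. or b = 0 a.e. -/
open MeasureTheory Complex Real AddCircle
open scoped ENNReal ComplexConjugate

noncomputable section

instance : Fact (0 < 2 * π) := ⟨by positivity⟩

/-- Normalized Haar (Lebesgue) measure on the unit circle, realized as `AddCircle (2π)`. -/
abbrev μT : Measure (AddCircle (2 * π)) := AddCircle.haarAddCircle

/-- The Lebesgue space `L²(𝕋)`. -/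
abbrev L2 : Type := Lp ℂ 2 μT

/-- The space `L^∞(𝕋)`. -/
abbrev Linf : Type := Lp ℂ ∞ μT

/-- Multiplication of an `L²` function by an `L^∞` function, as an element of `L²`. -/
def mul2 (a : Linf) (f : L2) : L2 :=
  ((Lp.memLp f).smul (Lp.memLp a)).toLp ((a : AddCircle (2 * π) → ℂ) • (f : AddCircle (2 * π) → ℂ))

lemma mul2_coe (a : Linf) (f : L2) :
    (mul2 a f : AddCircle (2 * π) → ℂ) =ᵐ[μT] fun x => a x * f x :=
  (MemLp.coeFn_toLp _)

/-- Multiplication in `L^∞`. -/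
def mulInf (a b : Linf) : Linf :=
  ((Lp.memLp b).smul (Lp.memLp a)).toLp ((a : AddCircle (2 * π) → ℂ) • (b : AddCircle (2 * π) → ℂ))

lemma mulInf_coe (a b : Linf) :
    (mulInf a b : AddCircle (2 * π) → ℂ) =ᵐ[μT] fun x => a x * b x :=
  (MemLp.coeFn_toLp _)

/-- Complex conjugation on `Lp`. -/
def conjLp {p : ℝ≥0∞} [Fact (1 ≤ p)] (f : Lp ℂ p μT) : Lp ℂ p μT :=
  MemLp.toLp (fun x => conj (f x))
    ⟨continuous_star.comp_aestronglyMeasurable (Lp.aestronglyMeasurable f),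
      by
        rw [eLpNorm_congr_norm_ae (g := (f : AddCircle (2 * π) → ℂ))
          (Filter.Eventually.of_forall fun x => by simp)]
        exact (Lp.memLp f).2⟩

lemma conjLp_coe {p : ℝ≥0∞} [Fact (1 ≤ p)] (f : Lp ℂ p μT) :
    (conjLp f : AddCircle (2 * π) → ℂ) =ᵐ[μT] fun x => conj (f x) :=
  (MemLp.coeFn_toLp _)

/-- The Hardy space `H²`, as the subspace of `L²(𝕋)` of functions whose negative Fourier
coefficients vanish. -/
def Hardy : Submodule ℂ L2 where
  carrier := {f | ∀ n : ℤ, n < 0 → fourierBasis.repr f n = 0}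
  add_mem' := fun hf hg n hn => by simp [hf n hn, hg n hn]
  zero_mem' := fun n hn => by simp
  smul_mem' := fun c f hf n hn => by simp [hf n hn]

lemma hardy_isClosed : IsClosed (Hardy : Set L2) := by
  have h : (Hardy : Set L2)
      = ⋂ n : ℤ, ⋂ _ : n < 0, {f : L2 | fourierBasis.repr f n = 0} := by
    ext f
    simp [Hardy, Set.mem_iInter]
  rw [h]
  refine isClosed_iInter fun n => isClosed_iInter fun hn => ?_
  have hc : Continuous fun f : L2 => fourierBasis.repr f n := by
    have : (fun f : L2 => fourierBasis.repr f n)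
        = fun f : L2 => (innerSL ℂ (fourierBasis n : L2)) f := by
      ext f
      rw [HilbertBasis.repr_apply_apply]
      rfl
    rw [this]
    exact (innerSL ℂ (fourierBasis n : L2)).continuous
  exact isClosed_eq hc continuous_const

instance : CompleteSpace Hardy := hardy_isClosed.completeSpace_coe

/-- The Riesz projection `P⁺ : L² → L²`, i.e. the orthogonal projection onto `H²`. -/
def Pplus : L2 →L[ℂ] L2 := Hardy.subtypeL.comp Hardy.orthogonalProjectionOnto

/-- The complementary projection `P⁻ = I - P⁺`. -/
def Pminus : L2 →L[ℂ] L2 := ContinuousLinearMap.id ℂ L2 - Pplus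

lemma mul2_norm_le (a : Linf) (f : L2) : ‖mul2 a f‖ ≤ ‖a‖ * ‖f‖ := by
  rw [mul2, Lp.norm_toLp]
  have h := eLpNorm_smul_le_eLpNorm_top_mul_eLpNorm 2
    (Lp.aestronglyMeasurable f) (φ := (a : AddCircle (2 * π) → ℂ))
  refine le_trans (ENNReal.toReal_mono ?_ h) ?_
  · exact ENNReal.mul_ne_top (Lp.memLp a).2.ne (Lp.memLp f).2.ne
  · rw [ENNReal.toReal_mul, Lp.norm_def, Lp.norm_def]

/-- Multiplication by an `L^∞` function `a`, as a bounded operator `M_a` on `L²`. -/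
def Mult (a : Linf) : L2 →L[ℂ] L2 :=
  LinearMap.mkContinuous
    { toFun := mul2 a
      map_add' := fun f g => by
        refine Lp.ext ?_
        filter_upwards [mul2_coe a (f + g), mul2_coe a f, mul2_coe a g,
          Lp.coeFn_add f g, Lp.coeFn_add (mul2 a f) (mul2 a g)] with x h1 h2 h3 h4 h5
        simp only [h1, h5, Pi.add_apply, h2, h3, h4, mul_add]
      map_smul' := fun c f => by
        refine Lp.ext ?_
        filter_upwards [mul2_coe a (c • f), mul2_coe a f,
          Lp.coeFn_smul c f, Lp.coeFn_smul c (mul2 a f)] with x h1 h2 h3 h4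
        simp only [h1, h4, Pi.smul_apply, h2, h3, smul_eq_mul, RingHom.id_apply]
        ring }
    ‖a‖ (fun f => mul2_norm_le a f)

/-- The paired operator `S_{a,b} = a P⁺ + b P⁻` on `L²(𝕋)`. -/
def pairedS (a b : Linf) : L2 →L[ℂ] L2 :=
  (Mult a).comp Pplus + (Mult b).comp Pminus

/-- The transposed paired operator `Σ_{a,b} = P⁺ a + P⁻ b` on `L²(𝕋)`. -/
def pairedSigma (a b : Linf) : L2 →L[ℂ] L2 :=
  Pplus.comp (Mult a) + Pminus.comp (Mult b)

/-- Membership in `H^∞`: an `L^∞` function whose negative Fourier coefficients vanish. -/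
def MemHinf (a : Linf) : Prop := ∀ n : ℤ, n < 0 → fourierCoeff (a : AddCircle (2 * π) → ℂ) n = 0

/-- A pair `{a,b}` is nondegenerate if `a`, `b` and `a - b` are all nonzero a.e. on `𝕋`. -/
def Nondegenerate (a b : Linf) : Prop :=
  (∀ᵐ x ∂μT, a x ≠ 0) ∧ (∀ᵐ x ∂μT, b x ≠ 0) ∧ (∀ᵐ x ∂μT, a x - b x ≠ 0)

/-!
Write `S = M_a P⁺ + M_b P⁻` with `P⁻` the projection onto `(H²)ᗮ`. Pythagoras,
`‖f‖² = ‖P⁺f‖² + ‖P⁻f‖²`, and Cauchy–Schwarz in `ℝ²` give `‖S‖ ≤ √(‖a‖² + ‖b‖²)`, which is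
strictly less than `‖a‖ + ‖b‖` unless `a = 0` or `b = 0`. Conversely `‖S‖ ≥ max ‖a‖ ‖b‖`:
multiplication by `e_m` is an isometry commuting with `M_b`, and for `m ≫ 0` (resp. `m ≪ 0`)
it moves any trigonometric polynomial into `H²` (resp. `(H²)ᗮ`), where `S` acts as `M_a`
(resp. `M_b`); finally `‖M_b‖ = ‖b‖_∞`.
-/

open Filter Submodule

theorem mul_add_mul_le_sqrt_mul_sqrt (a b x y : ℝ) :
    a * x + b * y ≤ √(a ^ 2 + b ^ 2) * √(x ^ 2 + y ^ 2) := by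
  rw [← Real.sqrt_mul (by positivity)]
  exact Real.le_sqrt_of_sq_le (by nlinarith [sq_nonneg (a * y - b * x)])

theorem eq_add_iff_eq_zero_or_eq_zero_of_le_sqrt {A B s : ℝ} (hA : 0 ≤ A) (hB : 0 ≤ B)
    (hAs : A ≤ s) (hBs : B ≤ s) (hs : s ≤ √(A ^ 2 + B ^ 2)) : s = A + B ↔ A = 0 ∨ B = 0 := by
  have hs2 : s ^ 2 ≤ A ^ 2 + B ^ 2 := (Real.le_sqrt (hA.trans hAs) (by positivity)).mp hs
  constructor
  · rintro rfl
    exact mul_eq_zero.mp (by nlinarith [mul_nonneg hA hB])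
  · rintro (rfl | rfl)
    · rw [zero_pow two_ne_zero, zero_add, Real.sqrt_sq hB] at hs
      linarith
    · rw [zero_pow two_ne_zero, add_zero, Real.sqrt_sq hA] at hs
      linarith

theorem ContinuousLinearMap.opNorm_le_bound_of_dense {𝕜 E F : Type*} [NontriviallyNormedField 𝕜]
    [SeminormedAddCommGroup E] [NormedSpace 𝕜 E] [SeminormedAddCommGroup F] [NormedSpace 𝕜 F]
    (T : E →L[𝕜] F) {s : Set E} (hs : Dense s) {C : ℝ} (hC : 0 ≤ C)
    (h : ∀ x ∈ s, ‖T x‖ ≤ C * ‖x‖) : ‖T‖ ≤ C :=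
  T.opNorm_le_bound hC (hs.induction h (isClosed_le (by fun_prop) (by fun_prop)))

theorem eventually_mem_of_mem_span {R M N F ι : Type*} [Semiring R] [AddCommMonoid M]
    [Module R M] [AddCommMonoid N] [Module R N] [FunLike F M N] [LinearMapClass F R M N]
    {l : Filter ι} (T : ι → F) (K : Submodule R N) {s : Set M}
    (hs : ∀ x ∈ s, ∀ᶠ i in l, T i x ∈ K) {x : M} (hx : x ∈ span R s) :
    ∀ᶠ i in l, T i x ∈ K := by
  induction hx using Submodule.span_induction with
  | mem x hx => exact hs x hx
  | zero => simp
  | add x y _ _ hx hy =>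
    filter_upwards [hx, hy] with i hxi hyi
    simpa using K.add_mem hxi hyi
  | smul r x _ hx =>
    filter_upwards [hx] with i hxi
    simpa using K.smul_mem r hxi

theorem norm_comp_starProjection_add_comp_starProjection_orthogonal_le {𝕜 E F : Type*}
    [RCLike 𝕜] [NormedAddCommGroup E] [InnerProductSpace 𝕜 E] [SeminormedAddCommGroup F]
    [NormedSpace 𝕜 F] (K : Submodule 𝕜 E) [K.HasOrthogonalProjection] (A B : E →L[𝕜] F) :
    ‖A ∘L K.starProjection + B ∘L Kᗮ.starProjection‖ ≤ √(‖A‖ ^ 2 + ‖B‖ ^ 2) := by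
  refine ContinuousLinearMap.opNorm_le_bound _ (Real.sqrt_nonneg _) fun x => ?_
  calc ‖A (K.starProjection x) + B (Kᗮ.starProjection x)‖
      ≤ ‖A‖ * ‖K.starProjection x‖ + ‖B‖ * ‖Kᗮ.starProjection x‖ :=
        (norm_add_le _ _).trans (add_le_add (A.le_opNorm _) (B.le_opNorm _))
    _ ≤ √(‖A‖ ^ 2 + ‖B‖ ^ 2) * √(‖K.starProjection x‖ ^ 2 + ‖Kᗮ.starProjection x‖ ^ 2) :=
        mul_add_mul_le_sqrt_mul_sqrt _ _ _ _
    _ = √(‖A‖ ^ 2 + ‖B‖ ^ 2) * ‖x‖ := by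
        rw [← K.norm_sq_eq_add_norm_sq_starProjection x, Real.sqrt_sq (norm_nonneg x)]

theorem MeasureTheory.Lp.norm_eq_zero_iff_ae_eq_zero {α E : Type*} [MeasurableSpace α]
    {μ : Measure α} [NormedAddCommGroup E] {p : ℝ≥0∞} [Fact (1 ≤ p)] {f : Lp E p μ} :
    ‖f‖ = 0 ↔ ∀ᵐ x ∂μ, f x = 0 :=
  norm_eq_zero.trans Lp.eq_zero_iff_ae_eq_zero

theorem Pminus_eq : Pminus = Hardyᗮ.starProjection := by
  ext1 f
  rw [starProjection_orthogonal_val]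
  rfl

theorem pairedS_eq (a b : Linf) :
    pairedS a b = Mult a ∘L Hardy.starProjection + Mult b ∘L Hardyᗮ.starProjection := by
  rw [pairedS, Pminus_eq]
  rfl

theorem pairedS_apply_of_mem (a b : Linf) {f : L2} (hf : f ∈ Hardy) :
    pairedS a b f = Mult a f := by
  simp [pairedS_eq, starProjection_eq_self_iff.mpr hf, starProjection_orthogonal_apply_eq_zero hf]

theorem pairedS_apply_of_mem_orthogonal (a b : Linf) {f : L2} (hf : f ∈ Hardyᗮ) :
    pairedS a b f = Mult b f := by
  simp [pairedS_eq, starProjection_eq_self_iff.mpr hf,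
    (Hardy.starProjection_apply_eq_zero_iff).mpr hf]

theorem coeFn_Mult (a : Linf) (f : L2) : ⇑(Mult a f) =ᵐ[μT] fun x => a x * f x :=
  mul2_coe a f

theorem norm_Mult_le (a : Linf) : ‖Mult a‖ ≤ ‖a‖ :=
  LinearMap.mkContinuous_norm_le _ (norm_nonneg a) _

theorem norm_pairedS_le (a b : Linf) : ‖pairedS a b‖ ≤ √(‖a‖ ^ 2 + ‖b‖ ^ 2) := by
  rw [pairedS_eq]
  refine (norm_comp_starProjection_add_comp_starProjection_orthogonal_le _ _ _).trans ?_
  gcongr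
  · exact norm_Mult_le a
  · exact norm_Mult_le b

theorem norm_le_norm_Mult (b : Linf) : ‖b‖ ≤ ‖Mult b‖ := by
  refine le_of_forall_lt_imp_le_of_dense fun t ht => ?_
  rcases le_or_gt t 0 with ht0 | ht0
  · exact ht0.trans (norm_nonneg _)
  set E : Set (AddCircle (2 * π)) := {x | t < ‖b x‖}
  have hE : MeasurableSet E :=
    measurableSet_lt measurable_const (Lp.stronglyMeasurable b).measurable.norm
  have hμE : μT.real E ≠ 0 := by
    intro h0
    have hbound : ∀ᵐ x ∂μT, ‖b x‖ ≤ t := by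
      rw [measureReal_eq_zero_iff, ← compl_mem_ae_iff] at h0
      filter_upwards [h0] with x hx using not_lt.mp hx
    have := Lp.norm_le_of_ae_bound ht0.le hbound
    simp only [ENNReal.toReal_top, inv_zero, rpow_zero, one_mul] at this
    linarith
  -- `M_b` stretches the indicator of `{t < |b|}` by at least `t`
  set χ : L2 := indicatorConstLp 2 hE (measure_ne_top μT E) (1 : ℂ)
  have hχ : 0 < ‖χ‖ := by
    rw [norm_indicatorConstLp two_ne_zero ENNReal.ofNat_ne_top, norm_one, one_mul]
    have := measureReal_nonneg (μ := μT) (s := E)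
    positivity
  have hmult : ‖t • χ‖ ≤ ‖Mult b χ‖ := by
    refine Lp.norm_le_norm_of_ae_le ?_
    filter_upwards [Lp.coeFn_smul t χ, coeFn_Mult b χ,
      (indicatorConstLp_coeFn : ⇑χ =ᵐ[μT] E.indicator fun _ => 1)] with x h1 h2 h3
    rw [h1, h2, Pi.smul_apply, h3]
    by_cases hx : x ∈ E
    · simpa [Set.indicator_of_mem hx, abs_of_pos ht0] using le_of_lt hx
    · simp [Set.indicator_of_notMem hx]
  rw [norm_smul, Real.norm_of_nonneg ht0.le] at hmult
  exact le_of_mul_le_mul_right (hmult.trans ((Mult b).le_opNorm χ)) hχ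

def shift (m : ℤ) : L2 →L[ℂ] L2 := Mult (fourierLp ∞ m)

theorem coeFn_shift (m : ℤ) (f : L2) : ⇑(shift m f) =ᵐ[μT] fun x => fourier m x * f x := by
  filter_upwards [coeFn_Mult (fourierLp ∞ m) f, coeFn_fourierLp ∞ m] with x h1 h2
  rw [← h2]
  exact h1

theorem norm_shift_apply (m : ℤ) (f : L2) : ‖shift m f‖ = ‖f‖ := by
  have hnorm : ∀ᵐ x ∂μT, ‖shift m f x‖ = ‖f x‖ := by
    filter_upwards [coeFn_shift m f] with x hx
    rw [hx, norm_mul, fourier_apply, Circle.norm_coe, one_mul]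
  exact le_antisymm (Lp.norm_le_norm_of_ae_le (hnorm.mono fun _ h => h.le))
    (Lp.norm_le_norm_of_ae_le (hnorm.mono fun _ h => h.ge))

theorem shift_fourierBasis (m i : ℤ) : shift m (fourierBasis i) = fourierBasis (m + i) := by
  simp only [coe_fourierBasis]
  refine Lp.ext ?_
  filter_upwards [coeFn_shift m (fourierLp 2 i), coeFn_fourierLp 2 i,
    coeFn_fourierLp 2 (m + i)] with x h1 h2 h3
  rw [h1, h2, h3, fourier_add]

theorem Mult_shift (b : Linf) (m : ℤ) (f : L2) : Mult b (shift m f) = shift m (Mult b f) := by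
  refine Lp.ext ?_
  filter_upwards [coeFn_Mult b (shift m f), coeFn_shift m f, coeFn_shift m (Mult b f),
    coeFn_Mult b f] with x h1 h2 h3 h4
  rw [h1, h2, h3, h4]
  ring

theorem fourierBasis_mem_Hardy {k : ℤ} (hk : 0 ≤ k) : (fourierBasis k : L2) ∈ Hardy := by
  classical
  intro n hn
  rw [HilbertBasis.repr_self, lp.single_apply_ne _ _ _ (by omega)]

theorem fourierBasis_mem_Hardy_orthogonal {k : ℤ} (hk : k < 0) :
    (fourierBasis k : L2) ∈ Hardyᗮ := by
  intro f hf
  rw [← inner_conj_symm, ← fourierBasis.repr_apply_apply, hf k hk, map_zero]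

theorem eventually_shift_mem_Hardy {g : L2} (hg : g ∈ span ℂ (Set.range fourierBasis)) :
    ∀ᶠ m in atTop, shift m g ∈ Hardy := by
  refine eventually_mem_of_mem_span shift Hardy ?_ hg
  rintro _ ⟨i, rfl⟩
  filter_upwards [eventually_ge_atTop (-i)] with m hm
  rw [shift_fourierBasis]
  exact fourierBasis_mem_Hardy (by omega)

theorem eventually_shift_mem_Hardy_orthogonal {g : L2}
    (hg : g ∈ span ℂ (Set.range fourierBasis)) : ∀ᶠ m in atBot, shift m g ∈ Hardyᗮ := by
  refine eventually_mem_of_mem_span shift Hardyᗮ ?_ hg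
  rintro _ ⟨i, rfl⟩
  filter_upwards [eventually_lt_atBot (-i)] with m hm
  rw [shift_fourierBasis]
  exact fourierBasis_mem_Hardy_orthogonal (by omega)

theorem norm_Mult_le_of_eventually_shift (T : L2 →L[ℂ] L2) (b : Linf) {l : Filter ℤ} [l.NeBot]
    (h : ∀ g ∈ span ℂ (Set.range fourierBasis),
      ∀ᶠ m in l, T (shift m g) = Mult b (shift m g)) :
    ‖Mult b‖ ≤ ‖T‖ := by
  have hdense := dense_iff_topologicalClosure_eq_top.mpr (fourierBasis (T := 2 * π)).dense_span
  refine (Mult b).opNorm_le_bound_of_dense hdense (norm_nonneg T) fun g hg => ?_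
  obtain ⟨m, hm⟩ := (h g hg).exists
  calc ‖Mult b g‖ = ‖T (shift m g)‖ := by rw [hm, Mult_shift, norm_shift_apply]
    _ ≤ ‖T‖ * ‖shift m g‖ := T.le_opNorm _
    _ = ‖T‖ * ‖g‖ := by rw [norm_shift_apply]

theorem norm_le_norm_pairedS_left (a b : Linf) : ‖a‖ ≤ ‖pairedS a b‖ :=
  (norm_le_norm_Mult a).trans <| norm_Mult_le_of_eventually_shift _ a (l := atTop)
    fun _ hg => (eventually_shift_mem_Hardy hg).mono fun _ hm => pairedS_apply_of_mem a b hm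

theorem norm_le_norm_pairedS_right (a b : Linf) : ‖b‖ ≤ ‖pairedS a b‖ :=
  (norm_le_norm_Mult b).trans <| norm_Mult_le_of_eventually_shift _ b (l := atBot)
    fun _ hg => (eventually_shift_mem_Hardy_orthogonal hg).mono fun _ hm =>
      pairedS_apply_of_mem_orthogonal a b hm

/-- `‖S_{a,b}‖ = ‖a‖_∞ + ‖b‖_∞` iff `a = 0` a.e. or `b = 0` a.e. -/
theorem statement4 (a b : Linf) :
    ‖pairedS a b‖ = ‖a‖ + ‖b‖
      ↔ (∀ᵐ x ∂μT, a x = 0) ∨ (∀ᵐ x ∂μT, b x = 0) := by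
  rw [← Lp.norm_eq_zero_iff_ae_eq_zero, ← Lp.norm_eq_zero_iff_ae_eq_zero]
  exact eq_add_iff_eq_zero_or_eq_zero_of_le_sqrt (norm_nonneg a) (norm_nonneg b)
    (norm_le_norm_pairedS_left a b) (norm_le_norm_pairedS_right a b) (norm_pairedS_le a b)

end
end

section
/- Let a, ã, b, b̃ ∈ L^∞(T) with {a,b} and {ã,b̃} nondegenerate (i.e., a, b, a−b all nonzero a.e., and similarly for ã, b̃). Then S_{a,b} S_{ã,b̃} = S_{aã, bb̃} if and only if ã ∈ H^∞ and b̃ ∈ conj(H^∞). -/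
open MeasureTheory Complex Real AddCircle
open scoped ENNReal ComplexConjugate

noncomputable section

/-!
Since `P⁺` fixes `e₀ = 1` and `P⁻` fixes `e₋₁`, applying both sides of the identity to `e₀`
gives `a P⁺ã + b P⁻ã = a ã`, i.e. `(a - b) P⁻ã = 0`; as `a - b ≠ 0` a.e., `P⁻ã = 0` and
`ã ∈ H^∞`. Applying it to `e₋₁` gives `(a - b) P⁺(b̃ e₋₁) = 0` in the same way, and the vanishing
of the nonnegative coefficients of `b̃ e₋₁` says that `b̃ ∈ conj(H^∞)`. Conversely, `H^∞` maps
`H²` into itself and `conj(H^∞)` maps `(H²)^⊥` into itself, so `S_{ã,b̃} f = ã P⁺f + b̃ P⁻f` is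
already split into its `H²` and `(H²)^⊥` parts, on which `S_{a,b}` acts as `a` and `b`.
-/

section HilbertBasis

variable {ι 𝕜 E F : Type*} [RCLike 𝕜] [NormedAddCommGroup E] [InnerProductSpace 𝕜 E]
  [NormedAddCommGroup F] [InnerProductSpace 𝕜 F]

theorem HilbertBasis.mem_orthogonal_iff_repr_eq_zero (b : HilbertBasis ι 𝕜 E)
    {K : Submodule 𝕜 E} {s : Set ι} (hK : ∀ f, f ∈ K ↔ ∀ i ∉ s, b.repr f i = 0) (f : E) :
    f ∈ Kᗮ ↔ ∀ i ∈ s, b.repr f i = 0 := by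
  classical
  have hb : ∀ i ∈ s, b i ∈ K := fun i hi => (hK (b i)).2 fun j hj => by
    rw [b.repr_self, lp.single_apply, Pi.single_apply, if_neg (ne_of_mem_of_not_mem hi hj).symm]
  refine ⟨fun hf i hi => ?_, fun hf u hu => ?_⟩
  · rw [b.repr_apply_apply]
    exact hf _ (hb i hi)
  · have hterm : ∀ i, inner 𝕜 u (b i) * inner 𝕜 (b i) f = 0 := fun i => by
      by_cases hi : i ∈ s
      · rw [← b.repr_apply_apply, hf i hi, mul_zero]
      · rw [← inner_conj_symm, ← b.repr_apply_apply, (hK u).1 hu i hi, map_zero, zero_mul]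
    have hsum := b.hasSum_inner_mul_inner u f
    rw [funext hterm] at hsum
    exact hsum.unique hasSum_zero

theorem HilbertBasis.map_mem_of_repr_eq_zero (b : HilbertBasis ι 𝕜 E) (A : E →L[𝕜] F)
    {K : Submodule 𝕜 F} (hK : IsClosed (K : Set F)) {s : Set ι} (hA : ∀ i ∈ s, A (b i) ∈ K)
    {f : E} (hf : ∀ i ∉ s, b.repr f i = 0) : A f ∈ K := by
  have hsum := (b.hasSum_repr f).mapL A
  refine hK.mem_of_tendsto hsum (Filter.Eventually.of_forall fun t => K.sum_mem fun i _ => ?_)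
  by_cases hi : i ∈ s
  · simpa using K.smul_mem (b.repr f i) (hA i hi)
  · simp [hf i hi]

end HilbertBasis

section FourierCoeff

variable {T : ℝ} [Fact (0 < T)]

theorem fourierCoeff_fourier_mul (g : AddCircle T → ℂ) (m n : ℤ) :
    fourierCoeff (fun x => fourier m x * g x) n = fourierCoeff g (n - m) := by
  refine integral_congr_ae (Filter.Eventually.of_forall fun x => ?_)
  dsimp only
  rw [smul_eq_mul, smul_eq_mul, ← mul_assoc, ← fourier_add, neg_sub, sub_eq_neg_add]

theorem fourierCoeff_conj (g : AddCircle T → ℂ) (n : ℤ) :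
    fourierCoeff (fun x => conj (g x)) n = conj (fourierCoeff g (-n)) := by
  rw [fourierCoeff, fourierCoeff, ← integral_conj]
  refine integral_congr_ae (Filter.Eventually.of_forall fun x => ?_)
  simp only [smul_eq_mul, map_mul, ← fourier_neg, neg_neg]

end FourierCoeff

theorem fourierCoeff_mul2_fourierLp (a : Linf) (m n : ℤ) :
    fourierCoeff (mul2 a (fourierLp 2 m) : AddCircle (2 * π) → ℂ) n
      = fourierCoeff (a : AddCircle (2 * π) → ℂ) (n - m) := by
  have h : (mul2 a (fourierLp 2 m) : AddCircle (2 * π) → ℂ) =ᵐ[μT] fun x => fourier m x * a x := by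
    filter_upwards [mul2_coe a (fourierLp 2 m), coeFn_fourierLp 2 m] with x hx hm
    rw [hx, hm, mul_comm]
  rw [fourierCoeff_congr_ae h, fourierCoeff_fourier_mul]

theorem memHinf_conjLp_iff (b : Linf) :
    MemHinf (conjLp b) ↔ ∀ n : ℤ, 0 < n → fourierCoeff (b : AddCircle (2 * π) → ℂ) n = 0 := by
  simp only [MemHinf, fourierCoeff_congr_ae (conjLp_coe b), fourierCoeff_conj, map_eq_zero]
  exact ⟨fun h n hn => by simpa using h (-n) (by omega), fun h n hn => h (-n) (by omega)⟩

theorem mem_Hardy_iff (f : L2) : f ∈ Hardy ↔ ∀ n ∉ Set.Ici (0 : ℤ), fourierBasis.repr f n = 0 := by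
  simp [Hardy]

theorem mem_Hardy_orthogonal_iff (f : L2) :
    f ∈ Hardyᗮ ↔ ∀ n : ℤ, 0 ≤ n → fourierBasis.repr f n = 0 :=
  fourierBasis.mem_orthogonal_iff_repr_eq_zero mem_Hardy_iff f

theorem fourierLp_mem_Hardy {n : ℤ} (hn : 0 ≤ n) : (fourierLp 2 n : L2) ∈ Hardy := by
  classical
  intro m hm
  rw [← coe_fourierBasis, fourierBasis.repr_self, lp.single_apply, Pi.single_apply,
    if_neg (by omega)]

theorem fourierLp_mem_Hardy_orthogonal {n : ℤ} (hn : n < 0) : (fourierLp 2 n : L2) ∈ Hardyᗮ := by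
  classical
  refine (mem_Hardy_orthogonal_iff _).2 fun m hm => ?_
  rw [← coe_fourierBasis, fourierBasis.repr_self, lp.single_apply, Pi.single_apply,
    if_neg (by omega)]

theorem Pplus_mem (f : L2) : Pplus f ∈ Hardy := Hardy.starProjection_apply_mem f

theorem Pminus_mem (f : L2) : Pminus f ∈ Hardyᗮ := Hardy.sub_starProjection_mem_orthogonal f

theorem Pplus_eq_self_iff {f : L2} : Pplus f = f ↔ f ∈ Hardy := Hardy.starProjection_eq_self_iff

theorem Pplus_eq_zero_iff {f : L2} : Pplus f = 0 ↔ f ∈ Hardyᗮ :=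
  Hardy.starProjection_apply_eq_zero_iff

theorem Pminus_apply (f : L2) : Pminus f = f - Pplus f := rfl

theorem Pminus_eq_zero_iff {f : L2} : Pminus f = 0 ↔ f ∈ Hardy := by
  rw [Pminus_apply, sub_eq_zero, eq_comm, Pplus_eq_self_iff]

theorem Pminus_eq_self_iff {f : L2} : Pminus f = f ↔ f ∈ Hardyᗮ := by
  rw [Pminus_apply, sub_eq_self, Pplus_eq_zero_iff]

theorem Pplus_add_Pminus (f : L2) : Pplus f + Pminus f = f := add_sub_cancel _ _

theorem mul2_mul2 (a b : Linf) (f : L2) : mul2 a (mul2 b f) = mul2 (mulInf a b) f := by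
  refine Lp.ext ?_
  filter_upwards [mul2_coe a (mul2 b f), mul2_coe b f, mul2_coe (mulInf a b) f,
    mulInf_coe a b] with x h1 h2 h3 h4
  rw [h1, h2, h3, h4, mul_assoc]

theorem mul2_mem_Hardy {a : Linf} (ha : MemHinf a) {f : L2} (hf : f ∈ Hardy) :
    mul2 a f ∈ Hardy := by
  refine fourierBasis.map_mem_of_repr_eq_zero (Mult a) hardy_isClosed
    (fun m (hm : 0 ≤ m) n hn => ?_) ((mem_Hardy_iff f).1 hf)
  rw [coe_fourierBasis, fourierBasis_repr]
  exact (fourierCoeff_mul2_fourierLp a m n).trans (ha _ (by omega))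

theorem mul2_mem_Hardy_orthogonal {b : Linf} (hb : MemHinf (conjLp b)) {f : L2}
    (hf : f ∈ Hardyᗮ) : mul2 b f ∈ Hardyᗮ := by
  refine fourierBasis.map_mem_of_repr_eq_zero (Mult b) Hardy.isClosed_orthogonal
    (s := Set.Iio 0) (fun m (hm : m < 0) => (mem_Hardy_orthogonal_iff _).2 fun n hn => ?_)
    (fun n hn => (mem_Hardy_orthogonal_iff f).1 hf n (not_lt.1 hn))
  rw [coe_fourierBasis, fourierBasis_repr]
  exact (fourierCoeff_mul2_fourierLp b m n).trans ((memHinf_conjLp_iff b).1 hb _ (by omega))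

theorem mul2_zero (a : Linf) : mul2 a 0 = 0 := (Mult a).map_zero

theorem pairedS_apply (a b : Linf) (f : L2) :
    pairedS a b f = mul2 a (Pplus f) + mul2 b (Pminus f) := rfl

theorem pairedS_apply_of_mem_Hardy (a b : Linf) {f : L2} (hf : f ∈ Hardy) :
    pairedS a b f = mul2 a f := by
  rw [pairedS_apply, Pplus_eq_self_iff.2 hf, Pminus_eq_zero_iff.2 hf, mul2_zero, add_zero]

theorem pairedS_apply_of_mem_Hardy_orthogonal (a b : Linf) {f : L2} (hf : f ∈ Hardyᗮ) :
    pairedS a b f = mul2 b f := by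
  rw [pairedS_apply, Pplus_eq_zero_iff.2 hf, Pminus_eq_self_iff.2 hf, mul2_zero, zero_add]

theorem MeasureTheory.Lp.eq_zero_of_ae_mul_eq_zero {α : Type*} [MeasurableSpace α] {μ : Measure α}
    {p : ℝ≥0∞} {c : α → ℂ} (hc : ∀ᵐ x ∂μ, c x ≠ 0) {f : Lp ℂ p μ}
    (h : ∀ᵐ x ∂μ, c x * f x = 0) : f = 0 := by
  refine Lp.ext ?_
  filter_upwards [hc, h, Lp.coeFn_zero ℂ p μ] with x hcx hx h0
  rw [h0, Pi.zero_apply]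
  exact (mul_eq_zero.1 hx).resolve_left hcx

theorem pairedS_coe (a b : Linf) (f : L2) :
    (pairedS a b f : AddCircle (2 * π) → ℂ) =ᵐ[μT]
      fun x => a x * Pplus f x + b x * Pminus f x := by
  filter_upwards [Lp.coeFn_add (mul2 a (Pplus f)) (mul2 b (Pminus f)),
    mul2_coe a (Pplus f), mul2_coe b (Pminus f)] with x hsum ha hb
  rw [pairedS_apply, hsum, Pi.add_apply, ha, hb]

theorem ae_sub_mul_eq_zero_of_pairedS_apply_eq {a b : Linf} {f : L2} (c : Linf)
    (h : pairedS a b f = mul2 c f) :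
    ∀ᵐ x ∂μT, (c x - a x) * Pplus f x + (c x - b x) * Pminus f x = 0 := by
  have hS := pairedS_coe a b f
  rw [h] at hS
  have hsum : (Pplus f + Pminus f : L2) =ᵐ[μT] f := by rw [Pplus_add_Pminus]
  filter_upwards [hS, mul2_coe c f, Lp.coeFn_add (Pplus f) (Pminus f), hsum]
    with x hS hc hadd hsum
  rw [hadd, Pi.add_apply] at hsum
  rw [← hsum] at hc
  linear_combination hc.symm.trans hS

theorem mem_Hardy_of_pairedS_apply_eq {a b : Linf} (hab : ∀ᵐ x ∂μT, a x - b x ≠ 0) {f : L2}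
    (h : pairedS a b f = mul2 a f) : f ∈ Hardy := by
  refine Pminus_eq_zero_iff.1 (Lp.eq_zero_of_ae_mul_eq_zero hab ?_)
  filter_upwards [ae_sub_mul_eq_zero_of_pairedS_apply_eq a h] with x hx
  linear_combination hx

theorem mem_Hardy_orthogonal_of_pairedS_apply_eq {a b : Linf} (hab : ∀ᵐ x ∂μT, a x - b x ≠ 0)
    {f : L2} (h : pairedS a b f = mul2 b f) : f ∈ Hardyᗮ := by
  refine Pplus_eq_zero_iff.1 (Lp.eq_zero_of_ae_mul_eq_zero hab ?_)
  filter_upwards [ae_sub_mul_eq_zero_of_pairedS_apply_eq b h] with x hx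
  linear_combination -hx

theorem statement5_general (a b ta tb : Linf)
    (h1 : Nondegenerate a b) :
    (pairedS a b).comp (pairedS ta tb) = pairedS (mulInf a ta) (mulInf b tb)
      ↔ MemHinf ta ∧ MemHinf (conjLp tb) := by
  obtain ⟨-, -, hab⟩ := h1
  constructor
  · intro h
    have he_pos : (fourierLp 2 0 : L2) ∈ Hardy := fourierLp_mem_Hardy le_rfl
    have he_neg : (fourierLp 2 (-1) : L2) ∈ Hardyᗮ := fourierLp_mem_Hardy_orthogonal (by norm_num)
    have hta := mem_Hardy_of_pairedS_apply_eq hab (f := mul2 ta (fourierLp 2 0)) (by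
      simpa [pairedS_apply_of_mem_Hardy _ _ he_pos, mul2_mul2] using congr($h (fourierLp 2 0)))
    have htb := mem_Hardy_orthogonal_of_pairedS_apply_eq hab (f := mul2 tb (fourierLp 2 (-1))) (by
      simpa [pairedS_apply_of_mem_Hardy_orthogonal _ _ he_neg, mul2_mul2]
        using congr($h (fourierLp 2 (-1))))
    refine ⟨fun n hn => ?_, (memHinf_conjLp_iff tb).2 fun n hn => ?_⟩
    · simpa [fourierBasis_repr, fourierCoeff_mul2_fourierLp] using hta n hn
    · simpa [fourierBasis_repr, fourierCoeff_mul2_fourierLp] using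
        (mem_Hardy_orthogonal_iff _).1 htb (n - 1) (by omega)
  · rintro ⟨hta, htb⟩
    ext1 f
    rw [ContinuousLinearMap.comp_apply, pairedS_apply ta tb, map_add,
      pairedS_apply_of_mem_Hardy _ _ (mul2_mem_Hardy hta (Pplus_mem f)),
      pairedS_apply_of_mem_Hardy_orthogonal _ _ (mul2_mem_Hardy_orthogonal htb (Pminus_mem f)),
      mul2_mul2, mul2_mul2, pairedS_apply]

/-- For nondegenerate `{a,b}` and `{ã,b̃}`: `S_{a,b} S_{ã,b̃} = S_{aã, bb̃}` iff
`ã ∈ H^∞` and `b̃ ∈ conj(H^∞)`. -/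
theorem statement5 (a b ta tb : Linf)
    (h1 : Nondegenerate a b) (h2 : Nondegenerate ta tb) :
    (pairedS a b).comp (pairedS ta tb) = pairedS (mulInf a ta) (mulInf b tb)
      ↔ MemHinf ta ∧ MemHinf (conjLp tb) :=
  statement5_general a b ta tb h1

end
end
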